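/- Let R be a commutative ring and 𝔾 a Gabriel filter of ideals in R with a base of finitely generated ideals such that for every I ∈ 𝔾 the ring R/I is semilocal of Krull dimension zero. Then an R-module N is 𝔾-torsion if and only if it is isomorphic to a direct sum ⊕_𝔪 N(𝔪) over the maximal ideals 𝔪 of R belonging to 𝔾, where each N(𝔪) is an 𝔪-torsion R-module. Such a decomposition is unique when it exists, and the summands can be recovered as the localizations N(𝔪) ≅ N_𝔪. -/

import Mathlib

universe u

open CategoryTheory

noncomputable section

/-- `Ext^n_R(M, N)`, as an `R`-module, computed via the derived-functor `Ext`
bifunctor on the category of `R`-modules. -/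
def extM (R : Type u) [CommRing R] (M N : Type u) [AddCommGroup M] [Module R M]
    [AddCommGroup N] [Module R N] (n : ℕ) : ModuleCat.{u} R :=
  ((_root_.Ext R (ModuleCat.{u} R) n).obj (Opposite.op (ModuleCat.of R M))).obj (ModuleCat.of R N)

/-- Contravariant functoriality of `Ext` in the first variable (pullback along `f`). -/
def extPull (R : Type u) [CommRing R] {M M' N : Type u} [AddCommGroup M] [Module R M]
    [AddCommGroup M'] [Module R M'] [AddCommGroup N] [Module R N]
    (f : M' →ₗ[R] M) (n : ℕ) : extM R M N n →ₗ[R] extM R M' N n :=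
  (((_root_.Ext R (ModuleCat.{u} R) n).map (ModuleCat.ofHom f).op).app (ModuleCat.of R N)).hom

/-- Covariant functoriality of `Ext` in the second variable (pushforward along `g`). -/
def extPush (R : Type u) [CommRing R] {M N N' : Type u} [AddCommGroup M] [Module R M]
    [AddCommGroup N] [Module R N] [AddCommGroup N'] [Module R N']
    (g : N →ₗ[R] N') (n : ℕ) : extM R M N n →ₗ[R] extM R M N' n :=
  (((_root_.Ext R (ModuleCat.{u} R) n).obj (Opposite.op (ModuleCat.of R M))).map
    (ModuleCat.ofHom g)).hom

/-- An `R`-module `C` is a `t`-contramodule if `Hom_R(R[t⁻¹], C) = 0` and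
`Ext¹_R(R[t⁻¹], C) = 0`, where `R[t⁻¹]` is the localization of `R` at the powers of `t`. -/
def IsTContra (R : Type u) [CommRing R] (t : R) (C : Type u) [AddCommGroup C]
    [Module R C] : Prop :=
  (∀ f : Localization.Away t →ₗ[R] C, f = 0) ∧
    Subsingleton (extM R (Localization.Away t) C 1)

/-- An `R`-module `C` is an `I`-contramodule if it is a `t`-contramodule for every `t ∈ I`. -/
def IsIdealContra (R : Type u) [CommRing R] (I : Ideal R) (C : Type u) [AddCommGroup C]
    [Module R C] : Prop :=
  ∀ t ∈ I, IsTContra R t C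

/-- A commutative ring is semilocal if it has only finitely many maximal ideals. -/
def IsSemilocal (T : Type u) [CommRing T] : Prop :=
  {I : Ideal T | I.IsMaximal}.Finite

/-- A commutative ring has Krull dimension zero if every prime ideal is maximal. -/
def IsKrullDimZero (T : Type u) [CommRing T] : Prop :=
  ∀ P : Ideal T, P.IsPrime → P.IsMaximal

/-- The structure map `algebraMap R U` is an epimorphism in the category of
(commutative) rings. -/
def IsRingEpi (R U : Type u) [CommRing R] [CommRing U] [Algebra R U] : Prop :=
  ∀ (T : Type u) [CommRing T], ∀ f g : U →+* T,
    f.comp (algebraMap R U) = g.comp (algebraMap R U) → f = g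

/-- The projective dimension of the `R`-module `M` is at most `1`: there is a short exact
sequence `0 → P₁ → P₀ → M → 0` with `P₀`, `P₁` projective. -/
def ProjDimLEOne (R : Type u) [CommRing R] (M : Type u) [AddCommGroup M] [Module R M] : Prop :=
  ∃ (P₁ P₀ : ModuleCat.{u} R) (f : P₁ →ₗ[R] P₀) (g : P₀ →ₗ[R] M),
    Module.Projective R P₁ ∧ Module.Projective R P₀ ∧
      Function.Injective f ∧ Function.Surjective g ∧ LinearMap.range f = LinearMap.ker g

/-- A filter of ideals in a commutative ring `R`. -/
def IsIdealFilter (R : Type u) [CommRing R] (F : Set (Ideal R)) : Prop :=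
  ⊤ ∈ F ∧ ∀ I J K : Ideal R, I ∈ F → J ∈ F → I ⊓ J ≤ K → K ∈ F

/-- A Gabriel filter of ideals in a commutative ring `R`. -/
def IsGabrielFilter (R : Type u) [CommRing R] (G : Set (Ideal R)) : Prop :=
  IsIdealFilter R G ∧
    ∀ J : Ideal R, (∃ I ∈ G, ∀ s ∈ I, J.colon (Ideal.span {s}) ∈ G) → J ∈ G

/-- A filter of ideals has a base of finitely generated ideals. -/
def HasFGBase (R : Type u) [CommRing R] (F : Set (Ideal R)) : Prop :=
  ∀ J ∈ F, ∃ I ∈ F, I ≤ J ∧ I.FG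

/-- An `R`-module `N` is `F`-torsion if the annihilator of every element belongs to `F`. -/
def IsFilterTorsion (R : Type u) [CommRing R] (F : Set (Ideal R)) (N : Type u)
    [AddCommGroup N] [Module R N] : Prop :=
  ∀ x : N, Ideal.torsionOf R N x ∈ F

/-- An `R`-module `N` is `I`-torsion if every `s ∈ I` acts locally nilpotently on `N`. -/
def IsIdealTorsion (R : Type u) [CommRing R] (I : Ideal R) (N : Type u)
    [AddCommGroup N] [Module R N] : Prop :=
  ∀ x : N, ∀ s ∈ I, ∃ n : ℕ, 1 ≤ n ∧ s ^ n • x = 0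

/-- The complement of a maximal ideal, as a submonoid. -/
def maxCompl {R : Type u} [CommRing R] {m : Ideal R} (hm : m.IsMaximal) : Submonoid R :=
  haveI := hm.isPrime
  m.primeCompl

end

/-! Write `Γ_𝔪 N` for the elements of `N` on which every element of `𝔪` acts nilpotently.
Elements outside a maximal ideal `𝔪` act invertibly on `Γ_𝔪 N`, while every element of
`Γ_𝔪' N`, `𝔪' ≠ 𝔪`, is killed by some element outside `𝔪`. Hence the `Γ_𝔪 N` are
independent, and in a decomposition `⊕ N(𝔪')` the projection onto `N(𝔪)` is the
localization at `𝔪`.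

A `𝔾`-torsion element `x` with `I = Ann x` lies in `∑ Γ_𝔪 N` by a local-global argument:
for a maximal `𝔪 ⊇ I`, choose `r` in the other (finitely many) maximal ideals over `I` but
not in `𝔪`. As `R/I` is zero-dimensional, `r^n ≡ r^(n+1) b (mod I)` for some `n, b`, so
`1 - rb` kills `r^n x`, and `𝔪` is the only prime over `Ann (r^n x)`: thus `r^n x ∈ Γ_𝔪 N`.
Conversely an `𝔪`-torsion element with `𝔪 ∈ 𝔾` is killed by `J^n` for a finitely generated
`J ⊆ 𝔪` in `𝔾`, and Gabriel filters are closed under products. -/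

theorem exists_pow_eq_pow_succ_mul {T : Type u} [CommRing T] (hT : IsKrullDimZero T) (s : T) :
    ∃ (n : ℕ) (b : T), s ^ n = s ^ (n + 1) * b := by
  by_contra! h
  let W : Submonoid T :=
    { carrier := {t | ∃ (n : ℕ) (b : T), t = s ^ n * (1 - s * b)}
      one_mem' := ⟨0, 0, by ring⟩
      mul_mem' := by
        rintro _ _ ⟨n, b, rfl⟩ ⟨n', b', rfl⟩
        exact ⟨n + n', b + b' - s * b * b', by ring⟩ }
  have hW : Disjoint ((⊥ : Ideal T) : Set T) W := Set.disjoint_left.2 fun t ht ⟨n, b, htW⟩ =>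
    h n b (by linear_combination Ideal.mem_bot.1 ht - htW)
  obtain ⟨P, hP, -, hPW⟩ := Ideal.exists_le_prime_disjoint ⊥ W hW
  have hsP : s ∉ P := Set.disjoint_left.1 hPW.symm ⟨1, 0, by ring⟩
  obtain ⟨y, i, hiP, hyi⟩ := (hT P hP).exists_inv hsP
  exact Set.disjoint_left.1 hPW hiP ⟨0, y, by linear_combination hyi⟩

section

variable {R : Type u} [CommRing R]

section Quotient

variable {I : Ideal R}

theorem Ideal.exists_pow_sub_pow_succ_mul_mem (hI : IsKrullDimZero (R ⧸ I)) (s : R) :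
    ∃ (n : ℕ) (b : R), s ^ n - s ^ (n + 1) * b ∈ I := by
  obtain ⟨n, b, hnb⟩ := exists_pow_eq_pow_succ_mul hI (Ideal.Quotient.mk I s)
  obtain ⟨b, rfl⟩ := Ideal.Quotient.mk_surjective b
  exact ⟨n, b, Ideal.Quotient.eq.1 (by simpa using hnb)⟩

theorem Ideal.IsPrime.isMaximal_of_isKrullDimZero_quotient (hI : IsKrullDimZero (R ⧸ I))
    {P : Ideal R} (hP : P.IsPrime) (hIP : I ≤ P) : P.IsMaximal := by
  have hsurj := Ideal.Quotient.mk_surjective (I := I)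
  have : (P.map (Ideal.Quotient.mk I)).IsPrime :=
    Ideal.map_isPrime_of_surjective hsurj (by rwa [Ideal.mk_ker])
  have := hI _ this
  rw [← Ideal.comap_map_mk hIP]
  exact Ideal.comap_isMaximal_of_surjective _ hsurj

theorem Ideal.finite_setOf_isMaximal_le (hI : IsSemilocal (R ⧸ I)) :
    {m : Ideal R | m.IsMaximal ∧ I ≤ m}.Finite := by
  refine (hI.image (Ideal.comap (Ideal.Quotient.mk I))).subset fun m ⟨hm, hIm⟩ => ?_
  refine ⟨m.map (Ideal.Quotient.mk I), ?_, Ideal.comap_map_mk hIm⟩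
  refine (Ideal.map_eq_top_or_isMaximal_of_surjective _ Ideal.Quotient.mk_surjective hm)
    |>.resolve_left fun h => hm.ne_top ?_
  rw [← Ideal.comap_map_mk hIm, h, Ideal.comap_top]

end Quotient

theorem Ideal.sup_span_singleton_eq_top_of_le_radical {m J : Ideal R} [hm : m.IsMaximal]
    (hJ : m ≤ J.radical) {t : R} (ht : t ∉ m) : J ⊔ span {t} = ⊤ := by
  by_contra h
  obtain ⟨M, hM, hJM⟩ := exists_le_maximal _ h
  have hmM : m = M :=
    hm.eq_of_le hM.ne_top (hJ.trans (hM.isPrime.radical_le_iff.2 (le_sup_left.trans hJM)))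
  exact ht (hmM ▸ hJM (mem_sup_right (mem_span_singleton_self t)))

theorem Ideal.torsionOf_map_of_injective {M M' : Type*} [AddCommGroup M] [Module R M]
    [AddCommGroup M'] [Module R M'] (f : M →ₗ[R] M') (hf : Function.Injective f) (x : M) :
    Ideal.torsionOf R M' (f x) = Ideal.torsionOf R M x := by
  ext r
  simp only [Ideal.mem_torsionOf_iff, ← map_smul, map_eq_zero_iff f hf]

theorem Submodule.mem_of_forall_isMaximal_exists_smul_mem {N : Type*} [AddCommGroup N]
    [Module R N] {p : Submodule R N} {x : N}
    (h : ∀ m : Ideal R, m.IsMaximal → ∃ r ∉ m, r • x ∈ p) : x ∈ p := by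
  by_contra hx
  have hJ : p.comap (LinearMap.toSpanSingleton R N x) ≠ ⊤ := fun hJ =>
    hx (by simpa using hJ.ge (Submodule.mem_top (x := (1 : R))))
  obtain ⟨m, hm, hJm⟩ := Ideal.exists_le_maximal _ hJ
  obtain ⟨r, hrm, hr⟩ := h m hm
  exact hrm (hJm hr)

section Filter

variable {G : Set (Ideal R)}

theorem IsIdealFilter.mem_of_le (hG : IsIdealFilter R G) {I J : Ideal R} (hI : I ∈ G)
    (hIJ : I ≤ J) : J ∈ G :=
  hG.2 I I J hI hI (inf_le_left.trans hIJ)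

def IsIdealFilter.torsion (hG : IsIdealFilter R G) (N : Type*) [AddCommGroup N] [Module R N] :
    Submodule R N where
  carrier := {x | Ideal.torsionOf R N x ∈ G}
  zero_mem' := by simpa using hG.1
  add_mem' {x y} hx hy := hG.2 _ _ _ hx hy fun r ⟨hrx, hry⟩ => by simp_all [smul_add]
  smul_mem' c x hx := hG.mem_of_le hx fun r hr => by simp_all [smul_comm r c]

theorem IsFilterTorsion.of_linearEquiv {N N' : Type u} [AddCommGroup N] [Module R N]
    [AddCommGroup N'] [Module R N'] (e : N ≃ₗ[R] N') (h : IsFilterTorsion R G N') :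
    IsFilterTorsion R G N := fun x => by
  rw [← Ideal.torsionOf_map_of_injective e.toLinearMap e.injective]
  exact h (e x)

open DirectSum in
theorem IsIdealFilter.isFilterTorsion_directSum (hG : IsIdealFilter R G) {ι : Type u}
    [DecidableEq ι] {M : ι → Type u} [∀ i, AddCommGroup (M i)] [∀ i, Module R (M i)]
    (h : ∀ i, IsFilterTorsion R G (M i)) : IsFilterTorsion R G (⨁ i, M i) := fun z =>
  show z ∈ hG.torsion _ from DirectSum.induction_on z (zero_mem _)
    (fun i y => show Ideal.torsionOf R _ (lof R ι M i y) ∈ G by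
      rw [Ideal.torsionOf_map_of_injective _ (of_injective i)]
      exact h i y)
    fun _ _ => add_mem

theorem IsGabrielFilter.mul_mem (hG : IsGabrielFilter R G) {I J : Ideal R} (hI : I ∈ G)
    (hJ : J ∈ G) : I * J ∈ G :=
  hG.2 _ ⟨I, hI, fun s hs => hG.1.mem_of_le hJ fun t ht => by
    rw [Ideal.mem_colon_span_singleton, mul_comm t s]
    exact Ideal.mul_mem_mul hs ht⟩

theorem IsGabrielFilter.pow_mem (hG : IsGabrielFilter R G) {I : Ideal R} (hI : I ∈ G) :
    ∀ n : ℕ, I ^ n ∈ G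
  | 0 => by simpa using hG.1.1
  | n + 1 => by simpa [pow_succ] using hG.mul_mem (hG.pow_mem hI n) hI

theorem IsGabrielFilter.torsionOf_mem_of_le_radical (hG : IsGabrielFilter R G)
    (hfg : HasFGBase R G) {N : Type*} [AddCommGroup N] [Module R N] {m : Ideal R} (hm : m ∈ G)
    {x : N} (hx : m ≤ (Ideal.torsionOf R N x).radical) : Ideal.torsionOf R N x ∈ G := by
  obtain ⟨J, hJG, hJm, hJfg⟩ := hfg m hm
  obtain ⟨n, hn⟩ := Ideal.exists_pow_le_of_le_radical_of_fg (hJm.trans hx) hJfg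
  exact hG.1.mem_of_le (hG.pow_mem hJG n) hn

end Filter

section IdealTorsion

variable {N : Type*} [AddCommGroup N] [Module R N]

variable (N) in
def Submodule.idealTorsion (I : Ideal R) : Submodule R N where
  carrier := {x | I ≤ (Ideal.torsionOf R N x).radical}
  zero_mem' := by simp [Ideal.radical_top]
  add_mem' {x y} hx hy := (le_inf hx hy).trans <| (Ideal.radical_inf _ _).ge.trans <|
    Ideal.radical_mono fun r ⟨hrx, hry⟩ => by simp_all [smul_add]
  smul_mem' c x hx := hx.trans <| Ideal.radical_mono fun r hr => by simp_all [smul_comm r c]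

theorem isIdealTorsion_iff_le_radical {I : Ideal R} {C : Type u} [AddCommGroup C] [Module R C] :
    IsIdealTorsion R I C ↔ ∀ x : C, I ≤ (Ideal.torsionOf R C x).radical := by
  refine forall_congr' fun x => ⟨fun h s hs => ?_, fun h s hs => ?_⟩
  · obtain ⟨n, -, hn⟩ := h s hs
    exact ⟨n, hn⟩
  · obtain ⟨n, hn⟩ := h hs
    refine ⟨n + 1, by omega, ?_⟩
    rw [pow_succ', mul_smul, (Ideal.mem_torsionOf_iff _ _).1 hn, smul_zero]

theorem isIdealTorsion_idealTorsion {N : Type u} [AddCommGroup N] [Module R N] (m : Ideal R) :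
    IsIdealTorsion R m (Submodule.idealTorsion N m) :=
  isIdealTorsion_iff_le_radical.2 fun x => by
    rw [← Ideal.torsionOf_map_of_injective _ (Submodule.injective_subtype _) x]
    exact x.2

variable {m : Ideal R} [m.IsMaximal]

theorem exists_mul_smul_eq_self_of_le_radical {x : N}
    (hx : m ≤ (Ideal.torsionOf R N x).radical) {t : R} (ht : t ∉ m) :
    ∃ a : R, (a * t) • x = x := by
  have h1 : (1 : R) ∈ Ideal.torsionOf R N x ⊔ Ideal.span {t} := by
    rw [Ideal.sup_span_singleton_eq_top_of_le_radical hx ht]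
    trivial
  obtain ⟨c, hc, d, hd, hcd⟩ := Submodule.mem_sup.1 h1
  obtain ⟨a, rfl⟩ := Ideal.mem_span_singleton'.1 hd
  refine ⟨a, ?_⟩
  calc (a * t) • x = (c + a * t) • x := by
        rw [add_smul, (Ideal.mem_torsionOf_iff _ _).1 hc, zero_add]
    _ = x := by rw [hcd, one_smul]

theorem Submodule.disjoint_idealTorsion_torsion'_primeCompl :
    Disjoint (idealTorsion N m) (torsion' R N m.primeCompl) := by
  refine Submodule.disjoint_def.2 fun x hx ⟨⟨t, ht⟩, htx⟩ => ?_
  obtain ⟨a, hax⟩ := exists_mul_smul_eq_self_of_le_radical hx ht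
  rw [← hax, mul_smul, show t • x = 0 from htx, smul_zero]

theorem smul_bijective_of_isIdealTorsion {C : Type u} [AddCommGroup C] [Module R C]
    (hC : IsIdealTorsion R m C) {t : R} (ht : t ∉ m) : Function.Bijective (t • · : C → C) := by
  rw [isIdealTorsion_iff_le_radical] at hC
  refine ⟨fun x y hxy => ?_, fun x => ?_⟩
  · obtain ⟨a, hax⟩ := exists_mul_smul_eq_self_of_le_radical (hC (x - y)) ht
    rw [← sub_eq_zero, ← hax, mul_smul, smul_sub, show t • x = t • y from hxy, sub_self,
      smul_zero]
  · obtain ⟨a, hax⟩ := exists_mul_smul_eq_self_of_le_radical (hC x) ht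
    exact ⟨a • x, show t • a • x = x by rw [smul_comm, ← mul_smul, hax]⟩

theorem mem_torsion'_primeCompl_of_le_radical {m' : Ideal R} [m'.IsMaximal] (hne : m' ≠ m)
    {x : N} (hx : m' ≤ (Ideal.torsionOf R N x).radical) :
    x ∈ Submodule.torsion' R N m.primeCompl := by
  have hm' : ¬(Ideal.torsionOf R N x).radical ≤ m := fun h =>
    hne (Ideal.IsMaximal.eq_of_le ‹_› Ideal.IsPrime.ne_top' (hx.trans h))
  rw [Ideal.IsPrime.radical_le_iff inferInstance] at hm'
  obtain ⟨u, hux, hum⟩ := SetLike.not_le_iff_exists.1 hm'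
  exact ⟨⟨u, hum⟩, hux⟩

theorem exists_smul_mem_idealTorsion {x : N}
    (hfin : IsSemilocal (R ⧸ Ideal.torsionOf R N x))
    (hdim : IsKrullDimZero (R ⧸ Ideal.torsionOf R N x)) (hxm : Ideal.torsionOf R N x ≤ m) :
    ∃ r ∉ m, r • x ∈ Submodule.idealTorsion N m := by
  set I := Ideal.torsionOf R N x
  set others := (Ideal.finite_setOf_isMaximal_le hfin).toFinset.erase m
  obtain ⟨r, hr, hrm⟩ : ∃ r ∈ others.inf id, r ∉ m := by
    refine SetLike.not_le_iff_exists.1 fun hle => ?_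
    obtain ⟨m', hm', hm'm⟩ := (Ideal.IsPrime.inf_le' inferInstance).1 hle
    obtain ⟨hne, hm'max, -⟩ := by simpa [others] using hm'
    exact hne (hm'max.eq_of_le Ideal.IsPrime.ne_top' hm'm)
  obtain ⟨n, b, hnb⟩ := I.exists_pow_sub_pow_succ_mul_mem hdim r
  refine ⟨r ^ n, fun h => hrm (Ideal.IsPrime.mem_of_pow_mem inferInstance n h), ?_⟩
  have hI : I ≤ Ideal.torsionOf R N (r ^ n • x) := fun a ha => by
    rw [Ideal.mem_torsionOf_iff, smul_comm, (Ideal.mem_torsionOf_iff _ _).1 ha, smul_zero]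
  have hu : 1 - r * b ∈ Ideal.torsionOf R N (r ^ n • x) := by
    rw [Ideal.mem_torsionOf_iff, smul_smul, ← (Ideal.mem_torsionOf_iff _ _).1 hnb]
    congr 1
    ring
  show m ≤ _
  rw [Ideal.radical_eq_sInf]
  refine le_sInf fun P ⟨hxP, hP⟩ => ?_
  rcases eq_or_ne P m with rfl | hPm
  · exact le_rfl
  have hPmax := hP.isMaximal_of_isKrullDimZero_quotient hdim (hI.trans hxP)
  have hPo : P ∈ others := Finset.mem_erase.2 ⟨hPm, by simpa using ⟨hPmax, hI.trans hxP⟩⟩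
  have hrP : r ∈ P := (Finset.inf_le (f := id) hPo : others.inf id ≤ P) hr
  have h1 : (1 : R) ∈ P := by simpa using P.add_mem (hxP hu) (P.mul_mem_right b hrP)
  exact absurd (P.eq_top_iff_one.2 h1) hP.ne_top

end IdealTorsion

section Decomposition

variable (N : Type*) [AddCommGroup N] [Module R N] (G : Set (Ideal R))

theorem iSupIndep_idealTorsion :
    iSupIndep fun m : {m : Ideal R // m.IsMaximal ∧ m ∈ G} => Submodule.idealTorsion N m.1 := by
  refine iSupIndep_def.2 fun ⟨m, hm, _⟩ => ?_
  have := hm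
  refine Submodule.disjoint_idealTorsion_torsion'_primeCompl.mono_right <|
    iSup₂_le fun ⟨m', hm', _⟩ hne x hx => ?_
  have := hm'
  exact mem_torsion'_primeCompl_of_le_radical (fun h => hne (Subtype.ext h)) hx

variable {N G}

theorem IsIdealFilter.mem_iSup_idealTorsion (hG : IsIdealFilter R G) {x : N}
    (hx : Ideal.torsionOf R N x ∈ G) (hfin : IsSemilocal (R ⧸ Ideal.torsionOf R N x))
    (hdim : IsKrullDimZero (R ⧸ Ideal.torsionOf R N x)) :
    x ∈ ⨆ m : {m : Ideal R // m.IsMaximal ∧ m ∈ G}, Submodule.idealTorsion N m.1 := by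
  refine Submodule.mem_of_forall_isMaximal_exists_smul_mem fun m hm => ?_
  by_cases hxm : Ideal.torsionOf R N x ≤ m
  · obtain ⟨r, hrm, hr⟩ := exists_smul_mem_idealTorsion hfin hdim hxm
    exact ⟨r, hrm, Submodule.mem_iSup_of_mem ⟨m, hm, hG.mem_of_le hx hxm⟩ hr⟩
  · obtain ⟨r, hr, hrm⟩ := SetLike.not_le_iff_exists.1 hxm
    exact ⟨r, hrm, by rw [(Ideal.mem_torsionOf_iff _ _).1 hr]; exact zero_mem _⟩

end Decomposition

section Localization

open DirectSum

variable {S : Submonoid R}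

theorem IsLocalizedModule.of_surjective_of_ker_le_torsion' {M M' : Type*} [AddCommGroup M]
    [Module R M] [AddCommGroup M'] [Module R M'] (f : M →ₗ[R] M')
    (hf : Function.Surjective f) (hS : ∀ s ∈ S, Function.Bijective (s • · : M' → M'))
    (hker : LinearMap.ker f ≤ Submodule.torsion' R M S) : IsLocalizedModule S f where
  map_units s := (Module.End.isUnit_iff _).2 (hS s s.2)
  surj y := let ⟨x, hx⟩ := hf y; ⟨⟨x, 1⟩, by rw [one_smul, hx]⟩
  exists_of_eq {x₁ x₂} h := by
    obtain ⟨c, hc⟩ := hker (show x₁ - x₂ ∈ LinearMap.ker f by simp [h])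
    exact ⟨c, by rw [← sub_eq_zero, ← smul_sub, hc]⟩

theorem DirectSum.isLocalizedModule_component {ι : Type*} [DecidableEq ι] {M : ι → Type*}
    [∀ i, AddCommGroup (M i)] [∀ i, Module R (M i)] (i : ι)
    (hS : ∀ s ∈ S, Function.Bijective (s • · : M i → M i))
    (htors : ∀ j ≠ i, ∀ y : M j, y ∈ Submodule.torsion' R (M j) S) :
    IsLocalizedModule S (component R ι M i) := by
  refine .of_surjective_of_ker_le_torsion' _ (fun y => ⟨lof R ι M i y, by simp⟩) hS
    fun w hw => ?_
  have key (w : ⨁ j, M j) :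
      w - lof R ι M i (component R ι M i w) ∈ Submodule.torsion' R (⨁ j, M j) S := by
    refine DirectSum.induction_on w (by simp) (fun j y => ?_) fun a b ha hb => ?_
    · rcases eq_or_ne j i with rfl | hji
      · simp [← lof_eq_of R]
      · obtain ⟨c, hc⟩ := htors j hji y
        refine ⟨c, ?_⟩
        show (c : R) • (lof R ι M j y - lof R ι M i (component R ι M i (lof R ι M j y))) = 0
        rw [component.of, dif_neg hji, map_zero, sub_zero, ← map_smul,
          show (c : R) • y = 0 from hc, map_zero]
    · simpa [sub_add_sub_comm] using add_mem ha hb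
  simpa [LinearMap.mem_ker.1 hw] using key w

end Localization

end

/-- Let `R` be a commutative ring and `G` a Gabriel filter of ideals in
`R` with a base of finitely generated ideals such that `R/I` is semilocal of Krull
dimension zero for every `I ∈ G`. Then an `R`-module `N` is `G`-torsion if and only if it
is isomorphic to a direct sum `⊕_𝔪 N(𝔪)` over the maximal ideals `𝔪 ∈ G`, where each
`N(𝔪)` is an `𝔪`-torsion `R`-module. Moreover, for any such decomposition the summands
are recovered as the localizations `N(𝔪) ≅ N_𝔪` (whence the decomposition is unique). -/
theorem stmt8 (R : Type u) [CommRing R] (G : Set (Ideal R))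
    (hGab : IsGabrielFilter R G) (hfg : HasFGBase R G)
    (hnil : ∀ I ∈ G, IsSemilocal (R ⧸ I) ∧ IsKrullDimZero (R ⧸ I))
    (N : Type u) [AddCommGroup N] [Module R N] :
    (IsFilterTorsion R G N ↔
      ∃ N' : {m : Ideal R // m.IsMaximal ∧ m ∈ G} → ModuleCat.{u} R,
        (∀ m, IsIdealTorsion R m.1 (N' m)) ∧
          Nonempty (N ≃ₗ[R] DirectSum {m : Ideal R // m.IsMaximal ∧ m ∈ G}
            (fun m => (N' m : Type u)))) ∧
    (∀ N' : {m : Ideal R // m.IsMaximal ∧ m ∈ G} → ModuleCat.{u} R,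
      (∀ m, IsIdealTorsion R m.1 (N' m)) →
      Nonempty (N ≃ₗ[R] DirectSum {m : Ideal R // m.IsMaximal ∧ m ∈ G}
        (fun m => (N' m : Type u))) →
      ∀ m : {m : Ideal R // m.IsMaximal ∧ m ∈ G},
        Nonempty ((N' m : Type u) ≃ₗ[R] LocalizedModule (maxCompl m.2.1) N)) := by
  classical
  refine ⟨⟨fun hN => ?_, fun ⟨N', hN', ⟨e⟩⟩ => ?_⟩, fun N' hN' ⟨e⟩ m => ?_⟩
  · have hint : DirectSum.IsInternal
        fun m : {m : Ideal R // m.IsMaximal ∧ m ∈ G} => Submodule.idealTorsion N m.1 :=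
      (DirectSum.isInternal_submodule_iff_iSupIndep_and_iSup_eq_top _).2
        ⟨iSupIndep_idealTorsion N G, eq_top_iff.2 fun x _ =>
          hGab.1.mem_iSup_idealTorsion (hN x) (hnil _ (hN x)).1 (hnil _ (hN x)).2⟩
    exact ⟨fun m => ModuleCat.of R (Submodule.idealTorsion N m.1),
      fun m => isIdealTorsion_idealTorsion m.1,
      ⟨(LinearEquiv.ofBijective (DirectSum.coeLinearMap _) hint).symm⟩⟩
  · exact .of_linearEquiv e <| hGab.1.isFilterTorsion_directSum fun m y =>
      hGab.torsionOf_mem_of_le_radical hfg m.2.2 (isIdealTorsion_iff_le_radical.1 (hN' m) y)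
  · have := m.2.1
    have : IsLocalizedModule (maxCompl m.2.1)
        (DirectSum.component R _ (fun m => (N' m : Type u)) m) :=
      DirectSum.isLocalizedModule_component m
        (fun s hs => smul_bijective_of_isIdealTorsion (hN' m) hs) fun j hj y => by
          have := j.2.1
          exact mem_torsion'_primeCompl_of_le_radical (fun h => hj (Subtype.ext h))
            (isIdealTorsion_iff_le_radical.1 (hN' j) y)
    exact ⟨(IsLocalizedModule.iso _ (DirectSum.component R _ _ m ∘ₗ e.toLinearMap)).symm⟩
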